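/- Let T ⊆ ℝ be closed, let ρ(x) = sup{y ∈ T : y < x} and σ(x) = inf{y ∈ T : y > x}, and let μ = 1_T·m + Σ_{x ∈ T not two-sided dense} ((σ(x)−ρ(x))/2) δ_x where m is Lebesgue measure. Then for any u, v ∈ T with u < v: ∫_{(u,v)} μ(da) = (v − u) − (σ(u)−u)/2 − (v−ρ(v))/2. -/

import Mathlib

open MeasureTheory

/-- `ρ(x) = sup{y ∈ T : y < x}`. -/
noncomputable def leftNbr (T : Set ℝ) (x : ℝ) : ℝ := sSup {y ∈ T | y < x}

/-- `σ(x) = inf{y ∈ T : y > x}`. -/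
noncomputable def rightNbr (T : Set ℝ) (x : ℝ) : ℝ := sInf {y ∈ T | x < y}

/-- The speed measure `μ = 1_T · m + Σ_{x ∈ T not two-sided dense} ((σ(x)-ρ(x))/2) δ_x`. -/
noncomputable def speedMeasure (T : Set ℝ) : Measure ℝ :=
  volume.restrict T +
    Measure.sum (fun x : {x : ℝ // x ∈ T ∧ (leftNbr T x ≠ x ∨ rightNbr T x ≠ x)} =>
      ENNReal.ofReal ((rightNbr T x - leftNbr T x) / 2) • Measure.dirac (x : ℝ))

/-! The atoms of `speedMeasure T` in `(u, v)` are the points `x ∈ T ∩ (u, v)`, with weight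
`(σ x - x) / 2 + (x - ρ x) / 2`. As `x` runs over `T ∩ (u, v)`, the right gaps `(x, σ x)` are
disjoint and tile `(σ u, v) \ T`, so `m (T ∩ (u, v)) + ∑ (σ x - x) = v - σ u`; only countably many
gaps are nonempty, which makes the uncountable sum a measure of a countable disjoint union.
Reflecting `T` gives `m (T ∩ (u, v)) + ∑ (x - ρ x) = ρ v - u`, and `μ (u, v)` is the average of
the two identities. -/

open Set
open scoped ENNReal

theorem ENNReal.ofReal_add_div_two {a b : ℝ} (ha : 0 ≤ a) (hb : 0 ≤ b) :
    ENNReal.ofReal ((a + b) / 2) = ENNReal.ofReal a / 2 + ENNReal.ofReal b / 2 := by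
  rw [ENNReal.ofReal_div_of_pos two_pos, ENNReal.ofReal_ofNat, ENNReal.ofReal_add ha hb,
    ENNReal.add_div]

theorem MeasureTheory.measure_biUnion_of_isOpen {X ι : Type*} [TopologicalSpace X]
    [TopologicalSpace.SeparableSpace X] [MeasurableSpace X] [OpensMeasurableSpace X]
    (μ : Measure X) {s : Set ι} {f : ι → Set X} (hd : s.PairwiseDisjoint f)
    (ho : ∀ i ∈ s, IsOpen (f i)) : μ (⋃ i ∈ s, f i) = ∑' i : s, μ (f i) := by
  set s' := {i ∈ s | (f i).Nonempty}
  have hd' : s'.PairwiseDisjoint f := hd.subset (sep_subset _ _)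
  have hunion : ⋃ i ∈ s, f i = ⋃ i ∈ s', f i := by
    ext x
    simp only [mem_iUnion, exists_prop, s', mem_ofPred_eq]
    exact ⟨fun ⟨i, hi, hx⟩ => ⟨i, ⟨hi, x, hx⟩, hx⟩, fun ⟨i, hi, hx⟩ => ⟨i, hi.1, hx⟩⟩
  have htsum : ∑' i : s', μ (f i) = ∑' i : s, μ (f i) := by
    rw [tsum_subtype s' fun i => μ (f i), tsum_subtype s fun i => μ (f i)]
    congr 1
    ext i
    simp only [indicator]
    split_ifs <;> simp_all [s', not_nonempty_iff_eq_empty]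
  rw [hunion, measure_biUnion (hd'.countable_of_isOpen (fun i hi => ho i hi.1) fun i hi => hi.2)
    hd' fun i hi => (ho i hi.1).measurableSet, htsum]

theorem MeasureTheory.Measure.sum_smul_dirac_apply {α : Type*} [MeasurableSpace α] (p : α → Prop)
    (c : α → ℝ≥0∞) {s : Set α} (hs : MeasurableSet s) :
    Measure.sum (fun x : {x // p x} => c x • Measure.dirac (x : α)) s
      = ∑' x : ↥(s ∩ {x | p x}), c x := by
  simp only [Measure.sum_apply _ hs, Measure.smul_apply, Measure.dirac_apply' _ hs, smul_eq_mul]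
  change ∑' x : ↥{x | p x}, c x * s.indicator 1 x = _
  rw [tsum_subtype (s ∩ {x | p x}), tsum_subtype {x | p x} fun x => c x * s.indicator 1 x]
  congr 1
  ext x
  by_cases hx : x ∈ s <;> by_cases hp : p x <;> simp [hx, hp]

section Neighbours

variable {T : Set ℝ} {t u v x : ℝ}

theorem rightNbr_le (ht : t ∈ T) (hxt : x < t) : rightNbr T x ≤ t :=
  csInf_le ⟨x, fun _ hy => hy.2.le⟩ ⟨ht, hxt⟩

theorem le_leftNbr (ht : t ∈ T) (htx : t < x) : t ≤ leftNbr T x :=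
  le_csSup ⟨x, fun _ hy => hy.2.le⟩ ⟨ht, htx⟩

theorem le_rightNbr (hv : v ∈ T) (hxv : x < v) (h : ∀ s ∈ T, x < s → t ≤ s) :
    t ≤ rightNbr T x :=
  le_csInf ⟨v, hv, hxv⟩ fun s hs => h s hs.1 hs.2

theorem self_le_rightNbr (hv : v ∈ T) (hxv : x < v) : x ≤ rightNbr T x :=
  le_rightNbr hv hxv fun _ _ => le_of_lt

theorem exists_mem_lt_of_rightNbr_lt (hv : v ∈ T) (hxv : x < v) (h : rightNbr T x < t) :
    ∃ s ∈ T, x < s ∧ s < t := by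
  obtain ⟨s, ⟨hsT, hxs⟩, hst⟩ := exists_lt_of_csInf_lt (s := {y ∈ T | x < y}) ⟨v, hv, hxv⟩ h
  exact ⟨s, hsT, hxs, hst⟩

theorem leftNbr_le_self (hu : u ∈ T) (hux : u < x) : leftNbr T x ≤ x :=
  csSup_le ⟨u, hu, hux⟩ fun _ hy => hy.2.le

theorem rightNbr_mem (hT : IsClosed T) (hv : v ∈ T) (hxv : x < v) : rightNbr T x ∈ T :=
  hT.closure_subset_iff.mpr (fun _ hy => hy.1)
    (csInf_mem_closure ⟨v, hv, hxv⟩ ⟨x, fun _ hy => hy.2.le⟩)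

theorem leftNbr_mem (hT : IsClosed T) (hu : u ∈ T) (hux : u < x) : leftNbr T x ∈ T :=
  hT.closure_subset_iff.mpr (fun _ hy => hy.1)
    (csSup_mem_closure ⟨u, hu, hux⟩ ⟨x, fun _ hy => hy.2.le⟩)

theorem rightNbr_neg (T : Set ℝ) (x : ℝ) : rightNbr (-T) (-x) = -leftNbr T x := by
  have : {y ∈ -T | -x < y} = -{y ∈ T | y < x} := by
    ext y
    simp [neg_lt]
  rw [rightNbr, this, Real.sInf_neg, leftNbr]

end Neighbours

section Gaps

variable {T : Set ℝ} {u v : ℝ}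

theorem pairwiseDisjoint_Ioo_rightNbr (T : Set ℝ) :
    T.PairwiseDisjoint fun x => Ioo x (rightNbr T x) := by
  have hdisj : ∀ x y, y ∈ T → x < y → Disjoint (Ioo x (rightNbr T x)) (Ioo y (rightNbr T y)) :=
    fun x y hy hxy => disjoint_left.mpr fun _ hz hz' =>
      (hz.2.trans_le (rightNbr_le hy hxy)).not_gt hz'.1
  intro x hx y hy hxy
  rcases hxy.lt_or_gt with h | h
  · exact hdisj x y hy h
  · exact (hdisj y x hx h).symm

theorem biUnion_Ioo_rightNbr (hT : IsClosed T) (hv : v ∈ T) (huv : u < v) :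
    ⋃ x ∈ Ioo u v ∩ T, Ioo x (rightNbr T x) = Ioo (rightNbr T u) v \ T := by
  ext y
  simp only [mem_iUnion, exists_prop]
  constructor
  · rintro ⟨x, ⟨⟨hux, hxv⟩, hxT⟩, hxy, hyx⟩
    exact ⟨⟨(rightNbr_le hxT hux).trans_lt hxy, hyx.trans_le (rightNbr_le hv hxv)⟩,
      fun hyT => (rightNbr_le hyT hxy).not_gt hyx⟩
  · rintro ⟨⟨huy, hyv⟩, hyT⟩
    -- the gap containing `y` starts at `leftNbr T y`
    obtain ⟨t, htT, hut, hty⟩ := exists_mem_lt_of_rightNbr_lt hv huv huy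
    set x := leftNbr T y
    have hxT : x ∈ T := leftNbr_mem hT htT hty
    have hxy : x < y := (leftNbr_le_self htT hty).lt_of_ne fun h => hyT (h ▸ hxT)
    have hyσ : y ≤ rightNbr T x := le_rightNbr hv (hxy.trans hyv) fun s hsT hxs =>
      le_of_not_gt fun hsy => (le_leftNbr hsT hsy).not_gt hxs
    refine ⟨x, ⟨⟨hut.trans_le (le_leftNbr htT hty), hxy.trans hyv⟩, hxT⟩, hxy,
      hyσ.lt_of_ne fun h => hyT (h ▸ rightNbr_mem hT hv (hxy.trans hyv))⟩

theorem volume_Ioo_inter_eq_volume_Ioo_rightNbr_inter (hv : v ∈ T) (huv : u < v) :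
    volume (Ioo u v ∩ T) = volume (Ioo (rightNbr T u) v ∩ T) := by
  refine le_antisymm ?_ (measure_mono (inter_subset_inter_left _
    (Ioo_subset_Ioo_left (self_le_rightNbr hv huv))))
  calc volume (Ioo u v ∩ T)
      ≤ volume (insert (rightNbr T u) (Ioo (rightNbr T u) v ∩ T)) := by
        refine measure_mono fun y ⟨⟨huy, hyv⟩, hyT⟩ => ?_
        rcases (rightNbr_le hyT huy).eq_or_lt with h | h
        · exact .inl h.symm
        · exact .inr ⟨⟨h, hyv⟩, hyT⟩
    _ = volume (Ioo (rightNbr T u) v ∩ T) := measure_congr (insert_ae_eq_self _ _)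

theorem volume_Ioo_inter_add_tsum_rightNbr_sub (hT : IsClosed T) (hv : v ∈ T) (huv : u < v) :
    volume (Ioo u v ∩ T) + ∑' x : ↥(Ioo u v ∩ T), ENNReal.ofReal (rightNbr T x - x)
      = ENNReal.ofReal (v - rightNbr T u) := by
  have hgaps : ∑' x : ↥(Ioo u v ∩ T), ENNReal.ofReal (rightNbr T x - x)
      = volume (Ioo (rightNbr T u) v \ T) := by
    simp_rw [← Real.volume_Ioo]
    rw [← measure_biUnion_of_isOpen volume
      ((pairwiseDisjoint_Ioo_rightNbr T).subset inter_subset_right) fun _ _ => isOpen_Ioo,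
      biUnion_Ioo_rightNbr hT hv huv]
  rw [hgaps, volume_Ioo_inter_eq_volume_Ioo_rightNbr_inter hv huv,
    measure_inter_add_sdiff _ hT.measurableSet, Real.volume_Ioo]

theorem volume_Ioo_inter_add_tsum_sub_leftNbr (hT : IsClosed T) (hu : u ∈ T) (huv : u < v) :
    volume (Ioo u v ∩ T) + ∑' x : ↥(Ioo u v ∩ T), ENNReal.ofReal (x - leftNbr T x)
      = ENNReal.ofReal (leftNbr T v - u) := by
  have h := volume_Ioo_inter_add_tsum_rightNbr_sub hT.neg (u := -v) (v := -u) (by simpa) (by simpa)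
  rw [← neg_Ioo, ← inter_neg, Measure.measure_neg, ← image_neg_eq_neg,
    tsum_image (fun y => ENNReal.ofReal (rightNbr (-T) y - y)) neg_injective.injOn,
    rightNbr_neg] at h
  simpa [rightNbr_neg, neg_add_eq_sub] using h

end Gaps

theorem speedMeasure_apply (T : Set ℝ) {s : Set ℝ} (hs : MeasurableSet s) :
    speedMeasure T s = volume (s ∩ T)
      + ∑' x : ↥(s ∩ T), ENNReal.ofReal ((rightNbr T x - leftNbr T x) / 2) := by
  let w x := ENNReal.ofReal ((rightNbr T x - leftNbr T x) / 2)
  rw [speedMeasure, Measure.add_apply, Measure.restrict_apply hs,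
    Measure.sum_smul_dirac_apply (fun x => x ∈ T ∧ (leftNbr T x ≠ x ∨ rightNbr T x ≠ x)) w hs,
    tsum_subtype _ w, tsum_subtype _ w]
  classical
  congr 2
  ext x
  -- points of `T` that are dense on both sides carry weight `0`
  simp only [indicator_apply, mem_inter_iff, mem_ofPred_eq]
  split_ifs with hP hT hT
  · rfl
  · exact absurd ⟨hP.1, hP.2.1⟩ hT
  · obtain ⟨hl, hr⟩ : leftNbr T x = x ∧ rightNbr T x = x := by tauto
    simp [w, hl, hr]
  · rfl

/-- for `u, v ∈ T` with `u < v`,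
`∫_{(u,v)} μ(da) = (v-u) - (σ(u)-u)/2 - (v-ρ(v))/2`. -/
theorem speedMeasure_Ioo (T : Set ℝ) (hT : IsClosed T) (u v : ℝ) (hu : u ∈ T) (hv : v ∈ T)
    (huv : u < v) :
    speedMeasure T (Set.Ioo u v)
      = ENNReal.ofReal ((v - u) - (rightNbr T u - u) / 2 - (v - leftNbr T v) / 2) := by
  have hsplit (x : ↥(Ioo u v ∩ T)) : ENNReal.ofReal ((rightNbr T x - leftNbr T x) / 2)
      = ENNReal.ofReal (rightNbr T x - x) / 2 + ENNReal.ofReal (x - leftNbr T x) / 2 := by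
    rw [← ENNReal.ofReal_add_div_two (sub_nonneg.mpr (self_le_rightNbr hv x.2.1.2))
      (sub_nonneg.mpr (leftNbr_le_self hu x.2.1.1)), sub_add_sub_cancel]
  have tsum_half (f : ↥(Ioo u v ∩ T) → ℝ≥0∞) : ∑' x, f x / 2 = (∑' x, f x) / 2 := by
    simp only [div_eq_mul_inv, ENNReal.tsum_mul_right]
  rw [speedMeasure_apply T measurableSet_Ioo, tsum_congr hsplit, ENNReal.tsum_add,
    tsum_half, tsum_half]
  set m := volume (Ioo u v ∩ T)
  calc m + ((∑' x : ↥(Ioo u v ∩ T), ENNReal.ofReal (rightNbr T x - x)) / 2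
        + (∑' x : ↥(Ioo u v ∩ T), ENNReal.ofReal (x - leftNbr T x)) / 2)
      = (m + ∑' x : ↥(Ioo u v ∩ T), ENNReal.ofReal (rightNbr T x - x)) / 2
        + (m + ∑' x : ↥(Ioo u v ∩ T), ENNReal.ofReal (x - leftNbr T x)) / 2 := by
        rw [ENNReal.add_div, ENNReal.add_div]
        conv_lhs => rw [← ENNReal.add_halves m]
        ac_rfl
    _ = ENNReal.ofReal (v - rightNbr T u) / 2 + ENNReal.ofReal (leftNbr T v - u) / 2 := by
        rw [volume_Ioo_inter_add_tsum_rightNbr_sub hT hv huv,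
          volume_Ioo_inter_add_tsum_sub_leftNbr hT hu huv]
    _ = _ := by
        rw [← ENNReal.ofReal_add_div_two (sub_nonneg.mpr (rightNbr_le hv huv))
          (sub_nonneg.mpr (le_leftNbr hu huv))]
        congr 1
        ring
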